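/- Let f ∈ S_q with q ∈ [1,∞). Then for every ε > 0 there exist σ_ε > 0 and C > 0 such that F⁻¹(σ) ≤ C σ^{−(q−1+ε)} for all σ ∈ (0, σ_ε). -/

import Mathlib

open MeasureTheory Filter Set Real Topology

/-! With `G = f F` and `F' = -1/f`, one has `G' = f' F - 1 → q - 1`, so `G u ≤ (q - 1 + ε) u` for
large `u`. This is the differential inequality `u F' + F / (q - 1 + ε) ≤ 0`, which makes
`F u * u ^ (q - 1 + ε)⁻¹` nonincreasing; hence `F u ≤ K u ^ (-(q - 1 + ε)⁻¹)`, and evaluating at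
`u = F⁻¹ σ` gives the bound. -/

theorem hasDerivAt_integral_Ioi {g : ℝ → ℝ} {a u : ℝ} (hau : a < u)
    (hg : IntegrableOn g (Ioi a)) (hgu : ContinuousAt g u) :
    HasDerivAt (fun x => ∫ t in Ioi x, g t) (-g u) u := by
  have hint : HasDerivAt (fun x => ∫ t in a..x, g t) (g u) u :=
    intervalIntegral.integral_hasDerivAt_right
      ((intervalIntegrable_iff_integrableOn_Ioc_of_le hau.le).2 (hg.mono_set Ioc_subset_Ioi_self))
      (AEStronglyMeasurable.stronglyMeasurableAtFilter_of_mem hg.aestronglyMeasurable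
        (Ioi_mem_nhds hau)) hgu
  refine (hint.const_sub (∫ t in Ioi a, g t)).congr_of_eventuallyEq ?_
  filter_upwards [Ioi_mem_nhds hau] with x hx
  exact eq_sub_of_add_eq' (intervalIntegral.integral_interval_add_Ioi hg
    (hg.mono_set (Ioi_subset_Ioi hx.le)))

theorem antitoneOn_Ici_of_hasDerivAt_nonpos {g g' : ℝ → ℝ} {a : ℝ}
    (hg : ∀ x ≥ a, HasDerivAt g (g' x) x) (hg' : ∀ x > a, g' x ≤ 0) :
    AntitoneOn g (Ici a) := by
  refine antitoneOn_of_hasDerivWithinAt_nonpos (f' := g') (convex_Ici a)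
    (fun x hx => (hg x hx).continuousAt.continuousWithinAt) (fun x hx => ?_) (fun x hx => ?_)
  · rw [interior_Ici] at hx ⊢
    exact (hg x hx.le).hasDerivWithinAt
  · rw [interior_Ici] at hx
    exact hg' x hx

theorem eventually_le_mul_of_tendsto_deriv {g g' : ℝ → ℝ} {L d : ℝ}
    (hg : ∀ᶠ x in atTop, HasDerivAt g (g' x) x) (hg' : Tendsto g' atTop (𝓝 L)) (hLd : L < d) :
    ∀ᶠ x in atTop, g x ≤ d * x := by
  obtain ⟨c, hLc, hcd⟩ := exists_between hLd
  obtain ⟨N, hN⟩ := eventually_atTop.1 (hg.and (hg'.eventually (eventually_le_nhds hLc)))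
  have hanti : AntitoneOn (fun x => g x - c * x) (Ici N) :=
    antitoneOn_Ici_of_hasDerivAt_nonpos (g' := fun x => g' x - c)
      (fun x hx => by simpa using (hN x hx).1.fun_sub ((hasDerivAt_id x).const_mul c))
      (fun x hx => sub_nonpos.2 (hN x hx.le).2)
  filter_upwards [eventually_ge_atTop N, eventually_ge_atTop ((g N - c * N) / (d - c))]
    with x hxN hx
  have h1 : g x - c * x ≤ g N - c * N := hanti self_mem_Ici hxN hxN
  have h2 := (div_le_iff₀ (sub_pos.2 hcd)).1 hx
  nlinarith

theorem antitoneOn_mul_rpow_of_hasDerivAt {g g' : ℝ → ℝ} {a r : ℝ} (ha : 0 < a)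
    (hg : ∀ x ≥ a, HasDerivAt g (g' x) x) (hg' : ∀ x > a, x * g' x + r * g x ≤ 0) :
    AntitoneOn (fun x => g x * x ^ r) (Ici a) := by
  refine antitoneOn_Ici_of_hasDerivAt_nonpos
    (g' := fun x => x ^ (r - 1) * (x * g' x + r * g x)) (fun x hxa => ?_) (fun x hxa => ?_)
  · have hx : 0 < x := ha.trans_le hxa
    refine ((hg x hxa).fun_mul (hasDerivAt_rpow_const (p := r) (Or.inl hx.ne'))).congr_deriv ?_
    rw [rpow_sub_one hx.ne']
    field_simp
  · exact mul_nonpos_of_nonneg_of_nonpos (rpow_nonneg (ha.trans hxa).le _) (hg' x hxa)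

theorem le_mul_rpow_neg_of_mul_rpow_inv_le {g : ℝ → ℝ} {a p K u : ℝ} (hp : 0 < p)
    (hdecay : ∀ x ≥ a, g x * x ^ p⁻¹ ≤ K) (hu : 0 < u) (hgu : 0 < g u) (hgu1 : g u ≤ 1) :
    u ≤ max a (K ^ p) * g u ^ (-p) := by
  have hpow : 1 ≤ g u ^ (-p) := one_le_rpow_of_pos_of_le_one_of_nonpos hgu hgu1 (by linarith)
  rcases le_total u a with hua | hau
  · have hua' : u ≤ max a (K ^ p) := hua.trans (le_max_left _ _)
    exact hua'.trans (le_mul_of_one_le_right (hu.le.trans hua') hpow)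
  · have h1 : u ^ p⁻¹ ≤ K / g u := by
      rw [le_div_iff₀ hgu, mul_comm]; exact hdecay u hau
    have hK : 0 ≤ K := le_trans (by positivity) (hdecay u hau)
    calc u = (u ^ p⁻¹) ^ p := by rw [← rpow_mul hu.le, inv_mul_cancel₀ hp.ne', rpow_one]
      _ ≤ (K / g u) ^ p := rpow_le_rpow (by positivity) h1 hp.le
      _ = K ^ p * g u ^ (-p) := by rw [div_rpow hK hgu.le, rpow_neg hgu.le, div_eq_mul_inv]
      _ ≤ max a (K ^ p) * g u ^ (-p) := by gcongr; exact le_max_right _ _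

theorem statement5_general (f f' : ℝ → ℝ) (q : ℝ) (hq1 : 1 ≤ q)
    (hf_diff : ∀ x > 0, HasDerivAt f (f' x) x)
    (hf_pos : ∀ x > 0, 0 < f x)
    (F : ℝ → ℝ) (hF : ∀ u, F u = ∫ τ in Set.Ioi u, 1 / f τ)
    (hF_fin : ∀ u > 0, IntegrableOn (fun τ => 1 / f τ) (Set.Ioi u))
    (hq : Tendsto (fun ξ => f' ξ * F ξ) atTop (nhds q))
    (Finv : ℝ → ℝ)
    (hFinv_right : ∀ ξ > 0, 0 < Finv ξ ∧ F (Finv ξ) = ξ) :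
    ∀ ε > 0, ∃ σε > 0, ∃ C > 0, ∀ σ ∈ Set.Ioo 0 σε,
      Finv σ ≤ C * σ ^ (-(q - 1 + ε)) := by
  intro ε hε
  set p := q - 1 + ε
  have hp : 0 < p := by linarith
  have hF' : ∀ u > 0, HasDerivAt F (-(1 / f u)) u := fun u hu => by
    rw [funext hF]
    exact hasDerivAt_integral_Ioi (half_lt_self hu) (hF_fin _ (half_pos hu))
      (continuousAt_const.div (hf_diff u hu).continuousAt (hf_pos u hu).ne')
  have hfF' : ∀ u > 0, HasDerivAt (fun x => f x * F x) (f' u * F u - 1) u := fun u hu =>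
    ((hf_diff u hu).fun_mul (hF' u hu)).congr_deriv (by field_simp [(hf_pos u hu).ne']; ring)
  obtain ⟨a, ha⟩ := eventually_atTop.1 (eventually_le_mul_of_tendsto_deriv
    ((eventually_gt_atTop 0).mono hfF') (hq.sub_const 1) (show q - 1 < p by linarith))
  set b := max a 1
  have hb : 0 < b := lt_max_of_lt_right one_pos
  have hdecay : AntitoneOn (fun x => F x * x ^ p⁻¹) (Ici b) := by
    refine antitoneOn_mul_rpow_of_hasDerivAt hb (fun x hx => hF' x (hb.trans_le hx)) fun x hx => ?_
    have hx0 : 0 < x := hb.trans hx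
    have hfx := hf_pos x hx0
    have e : x * -(1 / f x) + p⁻¹ * F x = (f x * F x - p * x) / (p * f x) := by
      field_simp
      ring
    rw [e]
    exact div_nonpos_of_nonpos_of_nonneg (sub_nonpos.2 (ha x ((le_max_left _ _).trans hx.le)))
      (by positivity)
  refine ⟨1, one_pos, max b ((F b * b ^ p⁻¹) ^ p), lt_max_of_lt_left hb, fun σ hσ => ?_⟩
  obtain ⟨hu, hFu⟩ := hFinv_right σ hσ.1
  have hbound := le_mul_rpow_neg_of_mul_rpow_inv_le hp (fun x hx => hdecay self_mem_Ici hx hx) hu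
    (hFu.symm ▸ hσ.1) (hFu.symm ▸ hσ.2.le)
  rwa [hFu] at hbound

/-- for f ∈ S_q, for every ε > 0 there exist σ_ε > 0 and C > 0 such that
F⁻¹(σ) ≤ C σ^{-(q-1+ε)} for all σ ∈ (0, σ_ε). -/
theorem statement5 (f f' : ℝ → ℝ) (q : ℝ) (hq1 : 1 ≤ q)
    (hf_cont : ContinuousOn f (Set.Ici 0))
    (hf_diff : ∀ x > 0, HasDerivAt f (f' x) x)
    (hf'_cont : ContinuousOn f' (Set.Ioi 0))
    (hf_pos : ∀ x > 0, 0 < f x)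
    (hf'_nonneg : ∀ x > 0, 0 ≤ f' x)
    (F : ℝ → ℝ) (hF : ∀ u, F u = ∫ τ in Set.Ioi u, 1 / f τ)
    (hF_fin : ∀ u > 0, IntegrableOn (fun τ => 1 / f τ) (Set.Ioi u))
    (hq : Tendsto (fun ξ => f' ξ * F ξ) atTop (nhds q))
    (Finv : ℝ → ℝ)
    (hFinv_left : ∀ u > 0, Finv (F u) = u)
    (hFinv_right : ∀ ξ > 0, 0 < Finv ξ ∧ F (Finv ξ) = ξ) :
    ∀ ε > 0, ∃ σε > 0, ∃ C > 0, ∀ σ ∈ Set.Ioo 0 σε,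
      Finv σ ≤ C * σ ^ (-(q - 1 + ε)) :=
  statement5_general f f' q hq1 hf_diff hf_pos F hF hF_fin hq Finv hFinv_right
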